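/- Let m, T, S be positive natural numbers. Given any F̃ ∈ (ℝ^{T+1})^m and any Ẽ ∈ (ℝ^S)^{m×m}, the pair (F̂, Ê) minimizing the squared Euclidean (Frobenius) distance ‖F − F̃‖² + ‖E − Ẽ‖² over the relaxed graph space 𝒢̄ exists, is unique, and is given coordinatewise by: for every i ∈ {1,…,m}, F̂_i = P_{Δ^T}(F̃_i), the metric projection of F̃_i onto the standard simplex Δ^T ⊆ ℝ^{T+1}; and for every pair (i,j), Ê_{i,j} = Ê_{j,i} = P_{Δ^{S−1}}((Ẽ_{i,j} + Ẽ_{j,i})/2), the metric projection of the average (Ẽ_{i,j} + Ẽ_{j,i})/2 onto the standard simplex Δ^{S−1} ⊆ ℝ^S. -/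

import Mathlib

/-!
On the relaxed graph space the edge features are symmetric, so pairing the `(i, j)` and `(j, i)`
terms and applying Apollonius' identity turns `‖E - Ẽ‖²` into `∑ ‖E_{ij} - (Ẽ_{ij} + Ẽ_{ji})/2‖²`
plus a constant. The objective is then a sum of independent squared distances to points of
simplices, each minimised exactly by the metric projection; projections onto a closed convex set
exist and are unique, and the projection of the symmetric averages is automatically symmetric.
-/

/-- The standard simplex `Δ^{k-1}` viewed inside the Euclidean space `ℝ^k`. -/
def euclSimplex (k : ℕ) : Set (EuclideanSpace ℝ (Fin k)) :=
  {a | (∀ i, 0 ≤ a i) ∧ ∑ i, a i = 1}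

/-- `p` is a metric projection of `x` onto `C`: `p` belongs to `C` and is
closest to `x` among all points of `C` (Euclidean norm). -/
def IsMetricProjOn {E : Type*} [NormedAddCommGroup E] (C : Set E) (x p : E) : Prop :=
  p ∈ C ∧ ∀ q ∈ C, ‖x - p‖ ≤ ‖x - q‖

/-- The relaxed graph space `𝒢̄` for `m` nodes, `T+1` node labels and `S` edge labels:
each node feature lies in the simplex `Δ^T ⊆ ℝ^{T+1}`, each edge feature lies in the simplex
`Δ^{S-1} ⊆ ℝ^S` and the edge features are symmetric. -/
def RelaxedGraphSpace (m T S : ℕ) :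
    Set ((Fin m → EuclideanSpace ℝ (Fin (T + 1))) ×
      (Fin m → Fin m → EuclideanSpace ℝ (Fin S))) :=
  {p | (∀ i, p.1 i ∈ euclSimplex (T + 1)) ∧ (∀ i j, p.2 i j ∈ euclSimplex S) ∧
    ∀ i j, p.2 i j = p.2 j i}

/-- The squared Frobenius distance `‖F − F̃‖² + ‖E − Ẽ‖²`. -/
noncomputable def graphSqDist (m T S : ℕ)
    (Ft : Fin m → EuclideanSpace ℝ (Fin (T + 1)))
    (Et : Fin m → Fin m → EuclideanSpace ℝ (Fin S))
    (p : (Fin m → EuclideanSpace ℝ (Fin (T + 1))) ×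
      (Fin m → Fin m → EuclideanSpace ℝ (Fin S))) : ℝ :=
  (∑ i, ‖p.1 i - Ft i‖ ^ 2) + ∑ i, ∑ j, ‖p.2 i j - Et i j‖ ^ 2


section MetricProjection

variable {E : Type*} [NormedAddCommGroup E]

theorem isMetricProjOn_iff_sq {C : Set E} {x p : E} :
    IsMetricProjOn C x p ↔ p ∈ C ∧ ∀ q ∈ C, ‖p - x‖ ^ 2 ≤ ‖q - x‖ ^ 2 := by
  simp only [IsMetricProjOn, norm_sub_rev x, sq_le_sq₀ (norm_nonneg _) (norm_nonneg _)]

theorem IsMetricProjOn.of_sq_le {C : Set E} {x p q : E} (hp : IsMetricProjOn C x p) (hq : q ∈ C)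
    (hqp : ‖q - x‖ ^ 2 ≤ ‖p - x‖ ^ 2) : IsMetricProjOn C x q :=
  isMetricProjOn_iff_sq.mpr ⟨hq, fun c hc => hqp.trans ((isMetricProjOn_iff_sq.mp hp).2 c hc)⟩

theorem IsCompact.exists_isMetricProjOn {C : Set E} (hC : IsCompact C) (hne : C.Nonempty)
    (x : E) : ∃ p, IsMetricProjOn C x p := by
  obtain ⟨p, hp, hmin⟩ :=
    hC.exists_isMinOn hne (continuous_const.sub continuous_id).norm.continuousOn
  exact ⟨p, hp, fun q hq => hmin hq⟩

variable [InnerProductSpace ℝ E]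

theorem norm_sub_sq_add_norm_sub_sq (x a b : E) :
    ‖x - a‖ ^ 2 + ‖x - b‖ ^ 2 = 2 * ‖x - midpoint ℝ a b‖ ^ 2 + ‖a - b‖ ^ 2 / 2 := by
  have h := EuclideanGeometry.dist_sq_add_dist_sq_eq_two_mul_dist_midpoint_sq_add_half_dist_sq x a b
  simp only [dist_eq_norm] at h
  linarith

theorem IsMetricProjOn.eq {C : Set E} (hC : Convex ℝ C) {x p q : E}
    (hp : IsMetricProjOn C x p) (hq : IsMetricProjOn C x q) : p = q := by
  have hmid : midpoint ℝ p q ∈ C := hC.segment_subset hp.1 hq.1 (midpoint_mem_segment p q)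
  have hpq : ‖x - p‖ = ‖x - q‖ := le_antisymm (hp.2 q hq.1) (hq.2 p hp.1)
  have hle : ‖x - p‖ ≤ ‖x - midpoint ℝ p q‖ := hp.2 _ hmid
  have hpar := norm_sub_sq_add_norm_sub_sq x p q
  have : ‖p - q‖ = 0 := by nlinarith [norm_nonneg (x - p), norm_nonneg (p - q)]
  exact sub_eq_zero.mp (norm_eq_zero.mp this)

end MetricProjection

theorem euclSimplex_eq_preimage (k : ℕ) :
    euclSimplex k = PiLp.continuousLinearEquiv 2 ℝ (fun _ : Fin k => ℝ) ⁻¹' stdSimplex ℝ (Fin k) :=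
  rfl

theorem convex_euclSimplex (k : ℕ) : Convex ℝ (euclSimplex k) := by
  rw [euclSimplex_eq_preimage]
  exact (convex_stdSimplex ℝ _).linear_preimage (PiLp.continuousLinearEquiv 2 ℝ _).toLinearMap

theorem isCompact_euclSimplex (k : ℕ) : IsCompact (euclSimplex k) := by
  rw [euclSimplex_eq_preimage]
  exact (PiLp.continuousLinearEquiv 2 ℝ _).toHomeomorph.isCompact_preimage.mpr
    (isCompact_stdSimplex ℝ _)

theorem euclSimplex_nonempty {k : ℕ} (hk : 0 < k) : (euclSimplex k).Nonempty :=
  ⟨WithLp.toLp 2 (Pi.single ⟨0, hk⟩ 1), single_mem_stdSimplex ℝ _⟩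

theorem exists_isMetricProjOn_euclSimplex {k : ℕ} (hk : 0 < k) (x : EuclideanSpace ℝ (Fin k)) :
    ∃ p, IsMetricProjOn (euclSimplex k) x p :=
  (isCompact_euclSimplex k).exists_isMetricProjOn (euclSimplex_nonempty hk) x

theorem sum_sum_norm_sub_sq_of_symm {ι E : Type*} [Fintype ι] [NormedAddCommGroup E]
    [InnerProductSpace ℝ E] (X Y : ι → ι → E) (hX : ∀ i j, X i j = X j i) :
    ∑ i, ∑ j, ‖X i j - Y i j‖ ^ 2 =
      ∑ i, ∑ j, ‖X i j - midpoint ℝ (Y i j) (Y j i)‖ ^ 2 + (∑ i, ∑ j, ‖Y i j - Y j i‖ ^ 2) / 4 := by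
  have hswap : ∑ i, ∑ j, ‖X i j - Y i j‖ ^ 2 = ∑ i, ∑ j, ‖X i j - Y j i‖ ^ 2 := by
    rw [Finset.sum_comm]
    simp only [hX]
  have hpair : ∑ i, ∑ j, (‖X i j - Y i j‖ ^ 2 + ‖X i j - Y j i‖ ^ 2) =
      ∑ i, ∑ j, (2 * ‖X i j - midpoint ℝ (Y i j) (Y j i)‖ ^ 2 + ‖Y i j - Y j i‖ ^ 2 / 2) := by
    simp only [norm_sub_sq_add_norm_sub_sq]
  simp only [Finset.sum_add_distrib, ← Finset.mul_sum, ← Finset.sum_div] at hpair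
  linarith

theorem forall_le_of_sum_le_sum {ι : Type*} [Fintype ι] {f g : ι → ℝ} (hfg : ∀ i, f i ≤ g i)
    (hsum : ∑ i, g i ≤ ∑ i, f i) (i : ι) : g i ≤ f i :=
  ((Finset.sum_eq_sum_iff_of_le fun i _ => hfg i).mp
    (le_antisymm (Finset.sum_le_sum fun i _ => hfg i) hsum) i (Finset.mem_univ i)).ge

section RelaxedGraphSpace

variable {m T S : ℕ} {Ft : Fin m → EuclideanSpace ℝ (Fin (T + 1))}
  {Et : Fin m → Fin m → EuclideanSpace ℝ (Fin S)}

variable (Ft Et) in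
def IsGraphProj (p : (Fin m → EuclideanSpace ℝ (Fin (T + 1))) ×
      (Fin m → Fin m → EuclideanSpace ℝ (Fin S))) : Prop :=
  (∀ i, IsMetricProjOn (euclSimplex (T + 1)) (Ft i) (p.1 i)) ∧
    ∀ i j, IsMetricProjOn (euclSimplex S) (midpoint ℝ (Et i j) (Et j i)) (p.2 i j)

variable (Ft Et) in
theorem exists_isGraphProj (hS : 0 < S) : ∃ p, IsGraphProj Ft Et p := by
  choose F hF using fun i => exists_isMetricProjOn_euclSimplex T.succ_pos (Ft i)
  choose E hE using fun i j => exists_isMetricProjOn_euclSimplex hS (midpoint ℝ (Et i j) (Et j i))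
  exact ⟨(F, E), hF, hE⟩

theorem graphSqDist_eq_of_symm (p : (Fin m → EuclideanSpace ℝ (Fin (T + 1))) ×
      (Fin m → Fin m → EuclideanSpace ℝ (Fin S))) (hp : ∀ i j, p.2 i j = p.2 j i) :
    graphSqDist m T S Ft Et p =
      (∑ i, ‖p.1 i - Ft i‖ ^ 2 + ∑ i, ∑ j, ‖p.2 i j - midpoint ℝ (Et i j) (Et j i)‖ ^ 2) +
        (∑ i, ∑ j, ‖Et i j - Et j i‖ ^ 2) / 4 := by
  rw [graphSqDist, sum_sum_norm_sub_sq_of_symm _ _ hp]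
  ring

namespace IsGraphProj

variable {p q : (Fin m → EuclideanSpace ℝ (Fin (T + 1))) ×
      (Fin m → Fin m → EuclideanSpace ℝ (Fin S))}

theorem symm (hp : IsGraphProj Ft Et p) (i j : Fin m) : p.2 i j = p.2 j i :=
  (hp.2 i j).eq (convex_euclSimplex S) (midpoint_comm (R := ℝ) (Et j i) (Et i j) ▸ hp.2 j i)

theorem mem (hp : IsGraphProj Ft Et p) : p ∈ RelaxedGraphSpace m T S :=
  ⟨fun i => (hp.1 i).1, fun i j => (hp.2 i j).1, hp.symm⟩

theorem eq (hp : IsGraphProj Ft Et p) (hq : IsGraphProj Ft Et q) : p = q :=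
  Prod.ext (funext fun i => (hp.1 i).eq (convex_euclSimplex _) (hq.1 i))
    (funext₂ fun i j => (hp.2 i j).eq (convex_euclSimplex _) (hq.2 i j))

theorem node_sq_le (hp : IsGraphProj Ft Et p) (hq : q ∈ RelaxedGraphSpace m T S) (i : Fin m) :
    ‖p.1 i - Ft i‖ ^ 2 ≤ ‖q.1 i - Ft i‖ ^ 2 :=
  (isMetricProjOn_iff_sq.mp (hp.1 i)).2 _ (hq.1 i)

theorem edge_sq_le (hp : IsGraphProj Ft Et p) (hq : q ∈ RelaxedGraphSpace m T S) (i j : Fin m) :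
    ‖p.2 i j - midpoint ℝ (Et i j) (Et j i)‖ ^ 2 ≤ ‖q.2 i j - midpoint ℝ (Et i j) (Et j i)‖ ^ 2 :=
  (isMetricProjOn_iff_sq.mp (hp.2 i j)).2 _ (hq.2.1 i j)

theorem graphSqDist_le (hp : IsGraphProj Ft Et p) (hq : q ∈ RelaxedGraphSpace m T S) :
    graphSqDist m T S Ft Et p ≤ graphSqDist m T S Ft Et q := by
  rw [graphSqDist_eq_of_symm p hp.symm, graphSqDist_eq_of_symm q hq.2.2]
  have hF := Finset.sum_le_sum (s := .univ) fun i _ => hp.node_sq_le hq i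
  have hE := Finset.sum_le_sum (s := .univ) fun i _ =>
    Finset.sum_le_sum (s := .univ) fun j _ => hp.edge_sq_le hq i j
  linarith

end IsGraphProj

theorem isGraphProj_of_forall_graphSqDist_le (hS : 0 < S)
    {p : (Fin m → EuclideanSpace ℝ (Fin (T + 1))) × (Fin m → Fin m → EuclideanSpace ℝ (Fin S))}
    (hp : p ∈ RelaxedGraphSpace m T S)
    (hmin : ∀ q ∈ RelaxedGraphSpace m T S, graphSqDist m T S Ft Et p ≤ graphSqDist m T S Ft Et q) :
    IsGraphProj Ft Et p := by
  obtain ⟨P, hP⟩ := exists_isGraphProj Ft Et hS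
  have hsum := hmin P hP.mem
  rw [graphSqDist_eq_of_symm p hp.2.2, graphSqDist_eq_of_symm P hP.symm] at hsum
  have hF := Finset.sum_le_sum (s := .univ) fun i _ => hP.node_sq_le hp i
  have hE := Finset.sum_le_sum (s := .univ) fun i _ =>
    Finset.sum_le_sum (s := .univ) fun j _ => hP.edge_sq_le hp i j
  -- `P` beats `p` term by term while `p` beats `P` in total, so every term of `p` is optimal
  have hF' := forall_le_of_sum_le_sum (hP.node_sq_le hp) (by linarith)
  have hE' := forall_le_of_sum_le_sum (fun i => Finset.sum_le_sum fun j _ => hP.edge_sq_le hp i j)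
    (by linarith)
  exact ⟨fun i => (hP.1 i).of_sq_le (hp.1 i) (hF' i), fun i j => (hP.2 i j).of_sq_le (hp.2.1 i j)
    (forall_le_of_sum_le_sum (hP.edge_sq_le hp i) (hE' i) j)⟩

end RelaxedGraphSpace

theorem stmt_0_general (m T S : ℕ) (hS : 0 < S)
    (Ft : Fin m → EuclideanSpace ℝ (Fin (T + 1)))
    (Et : Fin m → Fin m → EuclideanSpace ℝ (Fin S)) :
    (∃! p, p ∈ RelaxedGraphSpace m T S ∧
        ∀ q ∈ RelaxedGraphSpace m T S, graphSqDist m T S Ft Et p ≤ graphSqDist m T S Ft Et q) ∧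
    ∀ p, (p ∈ RelaxedGraphSpace m T S ∧
        ∀ q ∈ RelaxedGraphSpace m T S, graphSqDist m T S Ft Et p ≤ graphSqDist m T S Ft Et q) →
      (∀ i, IsMetricProjOn (euclSimplex (T + 1)) (Ft i) (p.1 i)) ∧
      (∀ i j, p.2 i j = p.2 j i ∧
        IsMetricProjOn (euclSimplex S) (midpoint ℝ (Et i j) (Et j i)) (p.2 i j)) := by
  obtain ⟨P, hP⟩ := exists_isGraphProj Ft Et hS
  have hopt : ∀ p, (p ∈ RelaxedGraphSpace m T S ∧ ∀ q ∈ RelaxedGraphSpace m T S,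
      graphSqDist m T S Ft Et p ≤ graphSqDist m T S Ft Et q) → IsGraphProj Ft Et p :=
    fun p hp => isGraphProj_of_forall_graphSqDist_le hS hp.1 hp.2
  refine ⟨⟨P, ⟨hP.mem, fun q hq => hP.graphSqDist_le hq⟩, fun p hp => (hopt p hp).eq hP⟩,
    fun p hp => ⟨(hopt p hp).1, fun i j => ⟨hp.1.2.2 i j, (hopt p hp).2 i j⟩⟩⟩

/-- Given `F̃ ∈ (ℝ^{T+1})^m` and `Ẽ ∈ (ℝ^S)^{m×m}`, the minimizer of the
squared Frobenius distance to `(F̃, Ẽ)` over the relaxed graph space `𝒢̄` exists, is unique,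
and is given coordinatewise by `F̂ᵢ = P_{Δ^T}(F̃ᵢ)` and
`Ê_{i,j} = Ê_{j,i} = P_{Δ^{S−1}}((Ẽ_{i,j} + Ẽ_{j,i})/2)`. -/
theorem stmt_0 (m T S : ℕ) (hm : 0 < m) (hT : 0 < T) (hS : 0 < S)
    (Ft : Fin m → EuclideanSpace ℝ (Fin (T + 1)))
    (Et : Fin m → Fin m → EuclideanSpace ℝ (Fin S)) :
    (∃! p, p ∈ RelaxedGraphSpace m T S ∧
        ∀ q ∈ RelaxedGraphSpace m T S, graphSqDist m T S Ft Et p ≤ graphSqDist m T S Ft Et q) ∧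
    ∀ p, (p ∈ RelaxedGraphSpace m T S ∧
        ∀ q ∈ RelaxedGraphSpace m T S, graphSqDist m T S Ft Et p ≤ graphSqDist m T S Ft Et q) →
      (∀ i, IsMetricProjOn (euclSimplex (T + 1)) (Ft i) (p.1 i)) ∧
      (∀ i j, p.2 i j = p.2 j i ∧
        IsMetricProjOn (euclSimplex S) (midpoint ℝ (Et i j) (Et j i)) (p.2 i j)) :=
  stmt_0_general m T S hS Ft Et
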